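/- Let R = ℂ[E₁,E₂] with the derivation f determined by f(E₁) = E₁² − 2E₂, f(E₂) = E₁E₂, and δ = 4E₂ − E₁². Then for all natural numbers j and all r ≥ 1, the r-th iterate of f satisfies f^r(δʲ) − (−1)ʲ·(2j)(2j+1)⋯(2j+r−1)·E₁^{2j+r} ∈ E₂·ℂ[E₁,E₂], i.e. modulo the ideal generated by E₂, f^r(δʲ) is congruent to (−1)ʲ·(∏_{i=0}^{r−1}(2j+i))·E₁^{2j+r}. -/

import Mathlib

/-!
Since `f(E₂) = E₁E₂`, the ideal `(E₂)` is `f`-stable, and since `f(E₁) ≡ E₁²` modulo `(E₂)`,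
`f` sends `c E₁ⁿ + (E₂)` into `c n E₁ⁿ⁺¹ + (E₂)`. Starting from `δʲ ≡ (-1)ʲ E₁²ʲ` and iterating
`r` times produces the rising product `(2j)(2j+1)⋯(2j+r-1)`.
-/

open MvPolynomial

namespace Derivation

variable {R A : Type*} [CommSemiring R] [CommRing A] [Algebra R A] (D : Derivation R A A)

theorem map_mem_span_singleton {y p : A} (hy : D y ∈ Ideal.span {y})
    (hp : p ∈ Ideal.span {y}) : D p ∈ Ideal.span {y} := by
  obtain ⟨s, rfl⟩ := Ideal.mem_span_singleton'.mp hp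
  rw [leibniz, smul_eq_mul, smul_eq_mul]
  exact Ideal.add_mem _ (Ideal.mul_mem_left _ _ hy)
    (Ideal.mul_mem_right _ _ (Ideal.mem_span_singleton_self y))

variable {I : Ideal A} {x : A}

theorem map_pow_sub_nsmul_pow_succ_mem (hx : D x - x ^ 2 ∈ I) (n : ℕ) :
    D (x ^ n) - n • x ^ (n + 1) ∈ I := by
  cases n with
  | zero => simp
  | succ m =>
    have h : D (x ^ (m + 1)) - (m + 1) • x ^ (m + 2) = ((m + 1) * x ^ m) * (D x - x ^ 2) := by
      rw [leibniz_pow, Nat.add_sub_cancel]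
      simp only [nsmul_eq_mul, smul_eq_mul]
      push_cast
      ring
    rw [h]
    exact Ideal.mul_mem_left _ _ hx

theorem map_sub_smul_pow_succ_mem (hI : ∀ p ∈ I, D p ∈ I) (hx : D x - x ^ 2 ∈ I)
    {p : A} {c : R} {n : ℕ} (hp : p - c • x ^ n ∈ I) :
    D p - (c * n) • x ^ (n + 1) ∈ I := by
  have h : D p - (c * n) • x ^ (n + 1)
      = D (p - c • x ^ n) + c • (D (x ^ n) - n • x ^ (n + 1)) := by
    rw [map_sub, map_smul, smul_sub, mul_smul, Nat.cast_smul_eq_nsmul, sub_add_sub_cancel]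
  rw [h]
  refine Ideal.add_mem _ (hI _ hp) ?_
  rw [Algebra.smul_def]
  exact Ideal.mul_mem_left _ _ (D.map_pow_sub_nsmul_pow_succ_mem hx n)

theorem pow_apply_sub_smul_pow_mem (hI : ∀ p ∈ I, D p ∈ I) (hx : D x - x ^ 2 ∈ I)
    {p : A} {c : R} {n : ℕ} (hp : p - c • x ^ n ∈ I) (r : ℕ) :
    (D.toLinearMap ^ r) p - (c * ∏ i ∈ Finset.range r, ((n : R) + i)) • x ^ (n + r) ∈ I := by
  induction r with
  | zero => simpa using hp
  | succ r ih =>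
    have h := D.map_sub_smul_pow_succ_mem hI hx ih
    rw [pow_succ', Module.End.mul_apply, Finset.prod_range_succ, ← mul_assoc]
    push_cast at h
    exact h

end Derivation

theorem f_iterate_on_delta_powers_mod_E2
    (f : Derivation ℂ (MvPolynomial (Fin 2) ℂ) (MvPolynomial (Fin 2) ℂ))
    (hf1 : f (X 0) = X 0 ^ 2 - 2 * X 1) (hf2 : f (X 1) = X 0 * X 1)
    (δ : MvPolynomial (Fin 2) ℂ) (hδ : δ = 4 * X 1 - X 0 ^ 2)
    (j r : ℕ) :
    (f.toLinearMap ^ r) (δ ^ j) -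
        ((-1 : ℂ) ^ j * ∏ i ∈ Finset.range r, ((2 * j : ℂ) + i)) • (X 0) ^ (2 * j + r)
      ∈ Ideal.span {(X 1 : MvPolynomial (Fin 2) ℂ)} := by
  set I := Ideal.span {(X 1 : MvPolynomial (Fin 2) ℂ)}
  have hI : ∀ p ∈ I, f p ∈ I := fun p =>
    f.map_mem_span_singleton (hf2 ▸ Ideal.mul_mem_left _ _ (Ideal.mem_span_singleton_self _))
  have hx : f (X 0) - X 0 ^ 2 ∈ I := by
    rw [hf1, sub_sub_cancel_left, neg_mem_iff]
    exact Ideal.mul_mem_left _ _ (Ideal.mem_span_singleton_self _)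
  have hδj : δ ^ j - (-1 : ℂ) ^ j • X 0 ^ (2 * j) ∈ I := by
    have h : δ ^ j - (-1 : ℂ) ^ j • X 0 ^ (2 * j) = δ ^ j - (-X 0 ^ 2) ^ j := by
      rw [Algebra.smul_def, map_pow, map_neg, map_one]
      ring
    rw [h, Ideal.mem_span_singleton]
    refine dvd_trans ?_ (sub_dvd_pow_sub_pow _ _ j)
    exact ⟨4, by rw [hδ]; ring⟩
  simpa using f.pow_apply_sub_smul_pow_mem hI hx hδj r
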